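/- arXiv:1603.05873 — 2 statements merged into one kernel-verified Lean document; each statement's English description precedes it below -/
import Mathlib

section
/- Free groups are residually nilpotent: the intersection over all q of the q-th terms of the lower central series of a free group is the trivial subgroup. -/
/-!
The Magnus embedding sends each generator `a` of `FreeGroup α` to the unit `1 + X a` of the ring
of noncommutative formal power series `ℤ⟪X a | a : α⟫`. If `u - 1` and `v - 1` only involve
words of length `≥ i` and `≥ j`, then so does `⁅u, v⁆ - 1` with `i + j`; hence the image of the
`q`-th term of the lower central series is congruent to `1` modulo words of length `≥ q + 1`, and
an element lying in all terms is mapped to `1`.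

It remains to see that the Magnus map is injective. A nontrivial element is a reduced product
`a₁ ^ e₁ ⋯ aₙ ^ eₙ` with `aᵢ ≠ aᵢ₊₁` and `eᵢ ≠ 0`. Expand the coefficient of the word `a₁ ⋯ aₙ`
in its image along the first factor `(1 + X a₁) ^ e₁`, a series in `X a₁` alone with linear
coefficient `e₁`: only two terms survive, `e₁` times the coefficient of `a₂ ⋯ aₙ` in the product
of the other factors, and the coefficient of `a₁ ⋯ aₙ` in that product. The latter vanishes,
because every word in the support of a product of `n - 1` single-variable series has at most
`n - 1` syllables. By induction the coefficient is `e₁ ⋯ eₙ ≠ 0`.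
-/

section PrincipalUnits

-- A multiplicative filtration: `SetLike.GradedMonoid F` only asks `F i * F j ⊆ F (i + j)`.
variable {S : Type*} [Ring S] (F : ℕ → AddSubgroup S) [SetLike.GradedMonoid F] (hF : F 0 = ⊤)

def principalUnits (q : ℕ) : Subgroup Sˣ where
  carrier := {u | (u : S) - 1 ∈ F q}
  one_mem' := by simp
  mul_mem' {u v} hu hv := by
    have hv₀ : (v : S) ∈ F 0 := hF ▸ AddSubgroup.mem_top _
    have h := add_mem (SetLike.GradedMul.mul_mem hu hv₀) hv
    rw [add_zero] at h
    simpa [sub_mul] using h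
  inv_mem' {u} hu := by
    have hu₀ : ((u⁻¹ : Sˣ) : S) ∈ F 0 := hF ▸ AddSubgroup.mem_top _
    have h := neg_mem (SetLike.GradedMul.mul_mem hu₀ hu)
    rw [zero_add] at h
    simpa [mul_sub] using h

variable {F hF}

theorem mem_principalUnits {q : ℕ} {u : Sˣ} :
    u ∈ principalUnits F hF q ↔ (u : S) - 1 ∈ F q :=
  Iff.rfl

open scoped commutatorElement in
theorem commutatorElement_mem_principalUnits {a b : ℕ} {u v : Sˣ}
    (hu : u ∈ principalUnits F hF a) (hv : v ∈ principalUnits F hF b) :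
    ⁅u, v⁆ ∈ principalUnits F hF (a + b) := by
  rw [mem_principalUnits] at hu hv ⊢
  -- `⁅u, v⁆ - 1 = (u v - v u) u⁻¹ v⁻¹` and `u v - v u = (u - 1)(v - 1) - (v - 1)(u - 1)`
  have hcomm : (u : S) * v - v * u ∈ F (a + b) := by
    have hvu := SetLike.GradedMul.mul_mem hv hu
    rw [add_comm] at hvu
    convert sub_mem (SetLike.GradedMul.mul_mem hu hv) hvu using 1
    noncomm_ring
  have h := SetLike.GradedMul.mul_mem hcomm
    (hF ▸ AddSubgroup.mem_top ((u⁻¹ : Sˣ) * (v⁻¹ : Sˣ) : S) : _ ∈ F 0)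
  rw [add_zero] at h
  convert h using 1
  simp only [commutatorElement_def, Units.val_mul, sub_mul, mul_assoc, Units.mul_inv_cancel_left,
    Units.mul_inv]

theorem lowerCentralSeries_le_comap_principalUnits {G : Type*} [Group G] (f : G →* Sˣ)
    (hf : ∀ g, f g ∈ principalUnits F hF 1) (n : ℕ) :
    (⊤ : Subgroup G).lowerCentralSeries n ≤ (principalUnits F hF (n + 1)).comap f :=
  Subgroup.descending_central_series_ge_lower (fun n => (principalUnits F hF (n + 1)).comap f)
    ⟨eq_top_iff.mpr fun g _ => hf g, fun x n hx g => by
      rw [Subgroup.mem_comap, map_commutatorElement]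
      exact commutatorElement_mem_principalUnits hx (hf g)⟩ n

end PrincipalUnits

theorem FreeGroup.exists_syllable_decomposition {α : Type*} (x : FreeGroup α) :
    ∃ B : List (α × ℤ), (B.map Prod.fst).IsChain (· ≠ ·) ∧ (∀ p ∈ B, p.2 ≠ 0) ∧
      (B.map fun p => of p.1 ^ p.2).prod = x := by
  classical
  -- the reduced word of `x` in the free product of the infinite cyclic groups `⟨a⟩`
  let w := Monoid.CoprodI.Word.equiv (freeGroupEquivCoprodI x)
  have hzpow (g : FreeGroup Unit) : of () ^ equivIntOfUnique g = g :=
    equivIntOfUnique.symm_apply_apply g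
  refine ⟨w.toList.map fun l => (l.1, equivIntOfUnique l.2), ?_, ?_, ?_⟩
  · simpa [List.isChain_map] using w.chain_ne
  · simp only [List.mem_map, forall_exists_index, and_imp]
    rintro _ l hl rfl h
    exact w.ne_one l hl (by rw [← hzpow l.2, show equivIntOfUnique l.2 = 0 from h, zpow_zero])
  · have hx : freeGroupEquivCoprodI.symm w.prod = x :=
      freeGroupEquivCoprodI.symm_apply_eq.mpr (Monoid.CoprodI.Word.equiv.symm_apply_apply _)
    rw [← hx, Monoid.CoprodI.Word.prod, map_list_prod, List.map_map, List.map_map]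
    congr 1
    refine List.map_congr_left fun l _ => ?_
    conv_rhs => rw [Function.comp_apply, ← hzpow l.2]
    simp only [Function.comp_apply, map_zpow, freeGroupEquivCoprodI_symm_apply,
      Monoid.CoprodI.lift_of, lift_apply_of]

-- Noncommutative power series as coefficient functions on words: a type synonym, so that the
-- Cauchy product `conv` below replaces the pointwise multiplication of functions.
def NCPowerSeries (R α : Type*) : Type _ := List α → R

namespace NCPowerSeries

variable {R α : Type*}

def leftQuot (a : α) (f : NCPowerSeries R α) : NCPowerSeries R α := fun w => f (a :: w)

theorem leftQuot_apply (a : α) (f : NCPowerSeries R α) (w : List α) :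
    leftQuot a f w = f (a :: w) :=
  rfl

variable [Ring R]

instance : AddCommGroup (NCPowerSeries R α) := inferInstanceAs (AddCommGroup (List α → R))

@[simp] theorem zero_apply (w : List α) : (0 : NCPowerSeries R α) w = 0 := rfl

@[simp] theorem add_apply (f g : NCPowerSeries R α) (w : List α) : (f + g) w = f w + g w := rfl

@[simp] theorem neg_apply (f : NCPowerSeries R α) (w : List α) : (-f) w = -f w := rfl

instance : One (NCPowerSeries R α) := ⟨fun | [] => 1 | _ :: _ => 0⟩

@[simp] theorem one_apply_nil : (1 : NCPowerSeries R α) [] = 1 := rfl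

@[simp] theorem one_apply_cons (a : α) (w : List α) : (1 : NCPowerSeries R α) (a :: w) = 0 :=
  rfl

-- `conv w f g = ∑_{w = u ++ v} f u * g v`
def conv : List α → (List α → R) → (List α → R) → R
  | [], f, g => f [] * g []
  | a :: w, f, g => f [] * g (a :: w) + conv w (fun u => f (a :: u)) g

theorem conv_add_left (w : List α) (f f' g : List α → R) :
    conv w (fun u => f u + f' u) g = conv w f g + conv w f' g := by
  induction w generalizing f f' with
  | nil => exact add_mul ..
  | cons a w ih => simp only [conv, add_mul, ih]; abel

theorem conv_add_right (w : List α) (f g g' : List α → R) :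
    conv w f (fun u => g u + g' u) = conv w f g + conv w f g' := by
  induction w generalizing f with
  | nil => exact mul_add ..
  | cons a w ih => simp only [conv, mul_add, ih]; abel

theorem conv_const_mul_left (w : List α) (c : R) (f g : List α → R) :
    conv w (fun u => c * f u) g = c * conv w f g := by
  induction w generalizing f with
  | nil => exact mul_assoc ..
  | cons a w ih => simp only [conv, ih, mul_add, mul_assoc]

theorem conv_zero_left (w : List α) (g : List α → R) : conv w (fun _ => 0) g = 0 := by
  induction w with
  | nil => exact zero_mul _
  | cons a w ih => simpa [conv] using ih

theorem conv_zero_right (w : List α) (f : List α → R) : conv w f (fun _ => 0) = 0 := by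
  induction w generalizing f with
  | nil => exact mul_zero _
  | cons a w ih => simpa [conv] using ih _

theorem conv_assoc (w : List α) (f g h : List α → R) :
    conv w (fun u => conv u f g) h = conv w f (fun u => conv u g h) := by
  induction w generalizing f with
  | nil => exact mul_assoc ..
  | cons a w ih =>
    simp only [conv, conv_add_left, conv_const_mul_left, ih, mul_add, mul_assoc, add_assoc]

theorem exists_append_of_conv_ne_zero {w : List α} {f g : List α → R} (h : conv w f g ≠ 0) :
    ∃ u v, w = u ++ v ∧ f u ≠ 0 ∧ g v ≠ 0 := by
  induction w generalizing f with
  | nil => exact ⟨[], [], rfl, left_ne_zero_of_mul h, right_ne_zero_of_mul h⟩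
  | cons a w ih =>
    by_cases h₀ : f [] * g (a :: w) = 0
    · obtain ⟨u, v, rfl, hu, hv⟩ := ih (by simpa [conv, h₀] using h)
      exact ⟨a :: u, v, rfl, hu, hv⟩
    · exact ⟨[], a :: w, rfl, left_ne_zero_of_mul h₀, right_ne_zero_of_mul h₀⟩

instance : Mul (NCPowerSeries R α) := ⟨fun f g w => conv w f g⟩

instance : Ring (NCPowerSeries R α) where
  one_mul f := funext fun
    | [] => one_mul _
    | a :: w => (congrArg₂ (· + ·) (one_mul _) (conv_zero_left w f)).trans (add_zero _)
  mul_one f := by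
    funext w
    show conv w f (1 : NCPowerSeries R α) = f w
    induction w generalizing f with
    | nil => exact mul_one _
    | cons a w ih => simp only [conv, one_apply_cons, mul_zero, zero_add]; exact ih _
  left_distrib f g h := funext fun w => conv_add_right w f g h
  right_distrib f g h := funext fun w => conv_add_left w f g h
  zero_mul f := funext fun w => conv_zero_left w f
  mul_zero f := funext fun w => conv_zero_right w f
  mul_assoc f g h := funext fun w => conv_assoc w f g h

theorem mul_apply_nil (f g : NCPowerSeries R α) : (f * g) [] = f [] * g [] := rfl

theorem mul_apply_cons (f g : NCPowerSeries R α) (a : α) (w : List α) :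
    (f * g) (a :: w) = f [] * g (a :: w) + (leftQuot a f * g) w :=
  rfl

theorem mul_apply_singleton (f g : NCPowerSeries R α) (a : α) :
    (f * g) [a] = f [] * g [a] + f [a] * g [] :=
  rfl

theorem exists_append_of_mul_apply_ne_zero {f g : NCPowerSeries R α} {w : List α}
    (h : (f * g) w ≠ 0) : ∃ u v, w = u ++ v ∧ f u ≠ 0 ∧ g v ≠ 0 :=
  exists_append_of_conv_ne_zero h

def orderFiltration (q : ℕ) : AddSubgroup (NCPowerSeries R α) where
  carrier := {f | ∀ w : List α, w.length < q → f w = 0}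
  zero_mem' _ _ := rfl
  add_mem' {f g} hf hg w hw := by rw [add_apply, hf w hw, hg w hw, add_zero]
  neg_mem' {f} hf w hw := by rw [neg_apply, hf w hw, neg_zero]

instance : SetLike.GradedMonoid (orderFiltration : ℕ → AddSubgroup (NCPowerSeries R α)) where
  one_mem _ hw := absurd hw (Nat.not_lt_zero _)
  mul_mem {a b f g} hf hg w hw := by
    by_contra h
    obtain ⟨u, v, rfl, hu, hv⟩ := exists_append_of_mul_apply_ne_zero h
    have := mt (hf u) hu
    have := mt (hg v) hv
    simp only [List.length_append] at hw
    omega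

theorem orderFiltration_zero : orderFiltration 0 = (⊤ : AddSubgroup (NCPowerSeries R α)) :=
  eq_top_iff.mpr fun _ _ _ hw => absurd hw (Nat.not_lt_zero _)

theorem eq_zero_of_forall_mem_orderFiltration {f : NCPowerSeries R α}
    (h : ∀ q, f ∈ orderFiltration (q + 1)) : f = 0 :=
  funext fun w => h w.length w w.length.lt_succ_self

-- `f ∈ syllableFiltration n` iff every word in the support of `f` has at most `n` syllables
-- (maximal blocks of equal letters), i.e. none of its subsequences without two equal adjacent
-- letters is longer than `n`.
def syllableFiltration (n : ℕ) : AddSubgroup (NCPowerSeries R α) where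
  carrier := {f | ∀ w, f w ≠ 0 → ∀ l : List α, l.Sublist w → l.IsChain (· ≠ ·) → l.length ≤ n}
  zero_mem' _ h := absurd rfl h
  add_mem' {f g} hf hg w hw := by
    by_cases hfw : f w = 0
    · exact hg w fun hgw => hw (by rw [add_apply, hfw, hgw, add_zero])
    · exact hf w hfw
  neg_mem' {f} hf w hw := hf w fun hfw => hw (by rw [neg_apply, hfw, neg_zero])

instance : SetLike.GradedMonoid (syllableFiltration : ℕ → AddSubgroup (NCPowerSeries R α)) where
  one_mem
    | [], _, l, hl, _ => by simp [List.sublist_nil.mp hl]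
    | _ :: _, h, _, _, _ => absurd rfl h
  mul_mem {m n f g} hf hg w hw l hl hchain := by
    obtain ⟨u, v, rfl, hu, hv⟩ := exists_append_of_mul_apply_ne_zero hw
    obtain ⟨l₁, l₂, rfl, hl₁, hl₂⟩ := List.sublist_append_iff.mp hl
    rw [List.length_append]
    exact add_le_add (hf u hu l₁ hl₁ hchain.left_of_append)
      (hg v hv l₂ hl₂ hchain.right_of_append)

def supportedOnPowers (a : α) : Subring (NCPowerSeries R α) where
  carrier := {f | ∀ w, f w ≠ 0 → ∀ b ∈ w, b = a}
  zero_mem' _ h := absurd rfl h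
  one_mem'
    | [], _ => by simp
    | _ :: _, h => absurd rfl h
  add_mem' {f g} hf hg w hw := by
    by_cases hfw : f w = 0
    · exact hg w fun hgw => hw (by rw [add_apply, hfw, hgw, add_zero])
    · exact hf w hfw
  neg_mem' {f} hf w hw := hf w fun hfw => hw (by rw [neg_apply, hfw, neg_zero])
  mul_mem' {f g} hf hg w hw := by
    obtain ⟨u, v, rfl, hu, hv⟩ := exists_append_of_mul_apply_ne_zero hw
    exact List.forall_mem_append.mpr ⟨hf u hu, hg v hv⟩

theorem supportedOnPowers_le_syllableFiltration_one (a : α) :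
    (supportedOnPowers a).toAddSubgroup ≤
      (syllableFiltration 1 : AddSubgroup (NCPowerSeries R α)) := by
  intro f hf w hw l hl hchain
  match l, hchain with
  | [], _ => exact zero_le_one
  | [_], _ => exact le_rfl
  | b :: c :: _, hchain =>
    have hb := hf w hw b (hl.subset (by simp))
    have hc := hf w hw c (hl.subset (by simp))
    exact absurd (hb.trans hc.symm) (List.isChain_cons_cons.mp hchain).1

theorem mul_apply_cons_of_mem_supportedOnPowers {f : NCPowerSeries R α} {a : α}
    (hf : f ∈ supportedOnPowers a) (g : NCPowerSeries R α) {w : List α}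
    (hw : ∀ b ∈ w.head?, a ≠ b) : (f * g) (a :: w) = f [] * g (a :: w) + f [a] * g w := by
  rw [mul_apply_cons]
  congr 1
  cases w with
  | nil => rfl
  | cons b w =>
    have hquot : leftQuot b (leftQuot a f) = 0 :=
      funext fun u => by_contra fun h => hw b rfl (hf _ h b (by simp)).symm
    rw [mul_apply_cons, hquot, zero_mul, zero_apply, add_zero]
    rfl

variable [DecidableEq α]

def X (a : α) : NCPowerSeries R α := fun w => if w = [a] then 1 else 0

def geomNegX (a : α) : NCPowerSeries R α :=
  fun w => if ∀ b ∈ w, b = a then (-1) ^ w.length else 0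

theorem one_add_X_apply_nil (a : α) : (1 + X a : NCPowerSeries R α) [] = 1 := by
  simp [X]

theorem leftQuot_one_add_X_self (a : α) : leftQuot a (1 + X a : NCPowerSeries R α) = 1 := by
  funext w
  cases w <;> simp [leftQuot, X]

theorem leftQuot_one_add_X_of_ne {a b : α} (h : b ≠ a) :
    leftQuot b (1 + X a : NCPowerSeries R α) = 0 := by
  funext w
  simp [leftQuot, X, h]

theorem geomNegX_apply_nil (a : α) : geomNegX a [] = (1 : R) := by simp [geomNegX]

theorem leftQuot_geomNegX_self (a : α) :
    leftQuot a (geomNegX a : NCPowerSeries R α) = -geomNegX a := by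
  funext w
  simp only [leftQuot, geomNegX, neg_apply, List.forall_mem_cons, true_and, List.length_cons]
  split_ifs <;> simp [pow_succ]

theorem leftQuot_geomNegX_of_ne {a b : α} (h : b ≠ a) :
    leftQuot b (geomNegX a : NCPowerSeries R α) = 0 := by
  funext w
  simp [leftQuot, geomNegX, h]

theorem one_add_X_mul_geomNegX (a : α) : (1 + X a) * geomNegX a = (1 : NCPowerSeries R α) := by
  funext w
  cases w with
  | nil => rw [mul_apply_nil, one_add_X_apply_nil, geomNegX_apply_nil, one_mul, one_apply_nil]
  | cons b w =>
    rw [mul_apply_cons, one_add_X_apply_nil, one_mul, one_apply_cons]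
    by_cases hb : b = a
    · subst hb
      rw [leftQuot_one_add_X_self, one_mul, ← leftQuot_apply b (geomNegX b),
        leftQuot_geomNegX_self, neg_apply, neg_add_cancel]
    · rw [leftQuot_one_add_X_of_ne hb, zero_mul, ← leftQuot_apply b (geomNegX a),
        leftQuot_geomNegX_of_ne hb, zero_apply, add_zero]

theorem geomNegX_mul_one_add_X (a : α) : geomNegX a * (1 + X a) = (1 : NCPowerSeries R α) := by
  funext w
  induction w with
  | nil => rw [mul_apply_nil, one_add_X_apply_nil, geomNegX_apply_nil, one_mul, one_apply_nil]
  | cons b w ih =>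
    rw [mul_apply_cons, geomNegX_apply_nil, one_mul, one_apply_cons, ← leftQuot_apply b (1 + X a)]
    by_cases hb : b = a
    · subst hb
      rw [leftQuot_one_add_X_self, leftQuot_geomNegX_self, neg_mul, neg_apply, ih, add_neg_cancel]
    · rw [leftQuot_one_add_X_of_ne hb, leftQuot_geomNegX_of_ne hb, zero_mul, zero_apply, add_zero]

def oneAddX (a : α) : (NCPowerSeries R α)ˣ :=
  ⟨1 + X a, geomNegX a, one_add_X_mul_geomNegX a, geomNegX_mul_one_add_X a⟩

theorem oneAddX_zpow_apply_nil (a : α) (n : ℤ) :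
    ((oneAddX a ^ n : (NCPowerSeries R α)ˣ) : NCPowerSeries R α) [] = 1 := by
  induction n using Int.induction_on with
  | zero => rfl
  | succ n ih =>
    rw [zpow_add_one, Units.val_mul, mul_apply_nil, ih, one_mul]
    exact one_add_X_apply_nil a
  | pred n ih =>
    rw [zpow_sub_one, Units.val_mul, mul_apply_nil, ih, one_mul]
    exact geomNegX_apply_nil a

theorem oneAddX_zpow_apply_singleton (a : α) (n : ℤ) :
    ((oneAddX a ^ n : (NCPowerSeries R α)ˣ) : NCPowerSeries R α) [a] = n := by
  induction n using Int.induction_on with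
  | zero => simp
  | succ n ih =>
    rw [zpow_add_one, Units.val_mul, mul_apply_singleton, ih, oneAddX_zpow_apply_nil]
    simp [oneAddX, X, add_comm]
  | pred n ih =>
    rw [zpow_sub_one, Units.val_mul, mul_apply_singleton, ih, oneAddX_zpow_apply_nil]
    simp [oneAddX, geomNegX, sub_eq_add_neg, add_comm]

theorem one_add_X_mem_supportedOnPowers (a : α) :
    (1 + X a : NCPowerSeries R α) ∈ supportedOnPowers a := by
  rintro (_ | ⟨b, w⟩) h c hc
  · simp at hc
  · have hw : b :: w = [a] := by_contra fun hne => h (by simp [X, hne])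
    rw [hw] at hc
    exact List.eq_of_mem_singleton hc

theorem geomNegX_mem_supportedOnPowers (a : α) :
    (geomNegX a : NCPowerSeries R α) ∈ supportedOnPowers a := by
  intro w h
  by_contra hw
  exact h (if_neg hw)

theorem oneAddX_zpow_mem_supportedOnPowers (a : α) (n : ℤ) :
    ((oneAddX a ^ n : (NCPowerSeries R α)ˣ) : NCPowerSeries R α) ∈ supportedOnPowers a := by
  induction n using Int.induction_on with
  | zero => exact one_mem _
  | succ n ih =>
    rw [zpow_add_one, Units.val_mul]
    exact mul_mem ih (one_add_X_mem_supportedOnPowers a)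
  | pred n ih =>
    rw [zpow_sub_one, Units.val_mul]
    exact mul_mem ih (geomNegX_mem_supportedOnPowers a)

theorem prod_oneAddX_zpow_mem_syllableFiltration (B : List (α × ℤ)) :
    (B.map fun p => ((oneAddX p.1 ^ p.2 : (NCPowerSeries R α)ˣ) : NCPowerSeries R α)).prod ∈
      syllableFiltration B.length := by
  simpa using SetLike.list_prod_map_mem_graded B (fun _ => 1) _ fun p _ =>
    supportedOnPowers_le_syllableFiltration_one p.1 (oneAddX_zpow_mem_supportedOnPowers p.1 p.2)

theorem prod_oneAddX_zpow_apply_map_fst :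
    ∀ B : List (α × ℤ), (B.map Prod.fst).IsChain (· ≠ ·) →
      (B.map fun p => ((oneAddX p.1 ^ p.2 : (NCPowerSeries R α)ˣ) : NCPowerSeries R α)).prod
        (B.map Prod.fst) = (B.map fun p => (p.2 : R)).prod
  | [], _ => rfl
  | (a, e) :: B, hB => by
    have hvanish : (B.map fun p => ((oneAddX p.1 ^ p.2 : (NCPowerSeries R α)ˣ) :
        NCPowerSeries R α)).prod (a :: B.map Prod.fst) = 0 := by
      by_contra h
      have := prod_oneAddX_zpow_mem_syllableFiltration B _ h _ (List.Sublist.refl _) hB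
      simp at this
    simp only [List.map_cons, List.prod_cons] at hB ⊢
    rw [mul_apply_cons_of_mem_supportedOnPowers (oneAddX_zpow_mem_supportedOnPowers a e) _
      hB.rel_head?, hvanish, prod_oneAddX_zpow_apply_map_fst B hB.tail,
      oneAddX_zpow_apply_singleton, mul_zero, zero_add]

end NCPowerSeries

namespace FreeGroup

open NCPowerSeries

variable {α : Type*} [DecidableEq α]

def magnus : FreeGroup α →* (NCPowerSeries ℤ α)ˣ := lift oneAddX

theorem val_magnus_list_prod_zpow (B : List (α × ℤ)) :
    (magnus (B.map fun p => of p.1 ^ p.2).prod : NCPowerSeries ℤ α) =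
      (B.map fun p => ((oneAddX p.1 ^ p.2 : (NCPowerSeries ℤ α)ˣ) : NCPowerSeries ℤ α)).prod := by
  rw [map_list_prod, ← Units.coeHom_apply, map_list_prod, List.map_map, List.map_map]
  simp [Function.comp_def, magnus]

theorem magnus_injective : Function.Injective (magnus (α := α)) := by
  refine (injective_iff_map_eq_one _).mpr fun x hx => ?_
  obtain ⟨B, hchain, hne, rfl⟩ := exists_syllable_decomposition x
  cases B with
  | nil => rfl
  | cons p B =>
    have hcoeff := prod_oneAddX_zpow_apply_map_fst (R := ℤ) (p :: B) hchain
    rw [← val_magnus_list_prod_zpow, hx] at hcoeff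
    have hprod : ((p :: B).map fun q => q.2).prod = 0 := hcoeff.symm
    refine absurd hprod (List.prod_ne_zero fun h => ?_)
    obtain ⟨q, hq, hq0⟩ := List.mem_map.mp h
    exact hne q hq hq0

theorem magnus_mem_principalUnits_one (x : FreeGroup α) :
    magnus x ∈ principalUnits (orderFiltration (R := ℤ) (α := α)) orderFiltration_zero 1 := by
  refine range_lift_le ?_ ⟨x, rfl⟩
  rintro _ ⟨a, rfl⟩ w hw
  rw [List.length_eq_zero_iff.mp (Nat.lt_one_iff.mp hw)]
  simp [oneAddX, X]

end FreeGroup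

/-- **Free groups are residually nilpotent**: the intersection of all terms of the
lower central series of a free group is trivial. -/
theorem freeGroup_residually_nilpotent (α : Type*) :
    (⨅ q : ℕ, (⊤ : Subgroup (FreeGroup α)).lowerCentralSeries q) = ⊥ := by
  classical
  refine (Subgroup.eq_bot_iff_forall _).mpr fun x hx => FreeGroup.magnus_injective ?_
  have hmem (q : ℕ) :
      FreeGroup.magnus x ∈ principalUnits _ NCPowerSeries.orderFiltration_zero (q + 1) :=
    lowerCentralSeries_le_comap_principalUnits _ FreeGroup.magnus_mem_principalUnits_one q
      (Subgroup.mem_iInf.mp hx q)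
  rw [map_one]
  exact Units.ext (sub_eq_zero.mp (NCPowerSeries.eq_zero_of_forall_mem_orderFiltration hmem))
end

section
/- For any group G, the quotient G/G_q^p is nilpotent of class less than q when p = 0, and for p prime it is a nilpotent group in which the image of G_j^p / G_q^p coincides with (G/G_q^p)_j^p for all j ≤ q; in particular (G/G_q^p)_q^p is trivial. -/
open scoped commutatorElement

/-- The mod-`p` lower central series: `modpLCS G p m` is `G_{m+1}^p`, so
`modpLCS G p 0 = G_1^p = G` and `G_{q+1}^p` is the normal closure of
`{ [x,y] * z^p : x ∈ G, y, z ∈ G_q^p }`. -/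
def modpLCS (G : Type*) [Group G] (p : ℕ) : ℕ → Subgroup G
  | 0 => ⊤
  | q + 1 => Subgroup.normalClosure
      {g | ∃ x y z : G, y ∈ modpLCS G p q ∧ z ∈ modpLCS G p q ∧ g = ⁅x, y⁆ * z ^ p}

instance modpLCS_normal (G : Type*) [Group G] (p q : ℕ) : (modpLCS G p q).Normal := by
  cases q with
  | zero => rw [modpLCS]; infer_instance
  | succ q => rw [modpLCS]; infer_instance

/-!
The series `G_j^p` is carried onto itself by every surjective homomorphism, so the image of
`G_q^p` in `Q = G/G_q^p` is both `Q_q^p` and trivial. Since `G_q^p` contains the `q`-th term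
`γ_q(G)` of the lower central series (the generators `[x,y]·1^p` already give `[G, γ_{q-1}(G)]`),
also `γ_q(Q) = 1`, i.e. `Q` is nilpotent of class less than `q`.
-/

theorem map_modpLCS_of_surjective {G H : Type*} [Group G] [Group H] {f : G →* H}
    (hf : Function.Surjective f) (p j : ℕ) : (modpLCS G p j).map f = modpLCS H p j := by
  induction j with
  | zero => exact Subgroup.map_top_of_surjective f hf
  | succ j ih =>
    rw [modpLCS, modpLCS, Subgroup.map_normalClosure _ f hf]
    congr 1
    ext g
    constructor
    · rintro ⟨_, ⟨x, y, z, hy, hz, rfl⟩, rfl⟩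
      exact ⟨f x, f y, f z, ih ▸ Subgroup.mem_map_of_mem f hy, ih ▸ Subgroup.mem_map_of_mem f hz,
        by simp [map_commutatorElement]⟩
    · rintro ⟨x, y, z, hy, hz, rfl⟩
      rw [← ih] at hy hz
      obtain ⟨y₀, hy₀, rfl⟩ := hy
      obtain ⟨z₀, hz₀, rfl⟩ := hz
      obtain ⟨x₀, rfl⟩ := hf x
      exact ⟨⁅x₀, y₀⁆ * z₀ ^ p, ⟨x₀, y₀, z₀, hy₀, hz₀, rfl⟩, by simp [map_commutatorElement]⟩

theorem modpLCS_quotient_modpLCS_eq_bot (G : Type*) [Group G] (p m : ℕ) :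
    modpLCS (G ⧸ modpLCS G p m) p m = ⊥ := by
  rw [← map_modpLCS_of_surjective (QuotientGroup.mk'_surjective _), Subgroup.map_eq_bot_iff,
    QuotientGroup.ker_mk']

theorem lowerCentralSeries_le_modpLCS (G : Type*) [Group G] (p j : ℕ) :
    (⊤ : Subgroup G).lowerCentralSeries j ≤ modpLCS G p j := by
  induction j with
  | zero => exact le_rfl
  | succ j ih =>
    rw [Subgroup.lowerCentralSeries_succ, Subgroup.commutator_le]
    intro g hg x _
    have hgen : ⁅x, g⁆ * 1 ^ p ∈ modpLCS G p (j + 1) :=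
      Subgroup.subset_normalClosure ⟨x, g, 1, ih hg, one_mem _, rfl⟩
    rw [one_pow, mul_one] at hgen
    simpa only [commutatorElement_inv] using inv_mem hgen

theorem lowerCentralSeries_eq_bot_of_modpLCS_eq_bot {G : Type*} [Group G] {p m : ℕ}
    (h : modpLCS G p m = ⊥) : (⊤ : Subgroup G).lowerCentralSeries m = ⊥ :=
  le_bot_iff.mp (h ▸ lowerCentralSeries_le_modpLCS G p m)

/-- For `Q = G/G_q^p` (with `q = m + 1`, so `G_q^p = modpLCS G p m`):
if `p = 0` then `Q` is nilpotent of class less than `q`; if `p` is prime then `Q` is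
nilpotent and the image of `G_j^p` in `Q` equals `Q_j^p` for all `j ≤ q`; in particular
`Q_q^p` is trivial. -/
theorem quotient_modpLCS_nilpotent (G : Type*) [Group G] (p m : ℕ) :
    (p = 0 → ∃ h : Group.IsNilpotent (G ⧸ modpLCS G p m),
      Group.nilpotencyClass (G ⧸ modpLCS G p m) < m + 1) ∧
    (p.Prime → Group.IsNilpotent (G ⧸ modpLCS G p m) ∧
      (∀ j ≤ m, modpLCS (G ⧸ modpLCS G p m) p j =
        (modpLCS G p j).map (QuotientGroup.mk' (modpLCS G p m))) ∧
      modpLCS (G ⧸ modpLCS G p m) p m = ⊥) := by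
  have hbot := modpLCS_quotient_modpLCS_eq_bot G p m
  have hlcs := lowerCentralSeries_eq_bot_of_modpLCS_eq_bot hbot
  have hnil : Group.IsNilpotent (G ⧸ modpLCS G p m) :=
    Subgroup.nilpotent_iff_lowerCentralSeries.mpr ⟨m, hlcs⟩
  refine ⟨fun _ => ⟨hnil, ?_⟩, fun _ => ⟨hnil, fun j _ => ?_, hbot⟩⟩
  · exact Nat.lt_succ_of_le (Subgroup.lowerCentralSeries_eq_bot_iff_nilpotencyClass_le.mp hlcs)
  · exact (map_modpLCS_of_surjective (QuotientGroup.mk'_surjective _) p j).symm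
end
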